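/- arXiv:1110.3347 — 3 statements merged into one kernel-verified Lean document; each statement's English description precedes it below -/
import Mathlib

section
/- If A is an invertible symmetric n×n matrix, B is p×n, D is p×p with m = (D - B A⁻¹ Bᵀ)⁻¹ existing, P ∈ ℝ^{1×n}, k* ∈ ℝ^{1×p}, y ∈ ℝⁿ deterministic, and y* ∈ ℝ^p a random vector whose i-th component equals B A⁻¹ y plus a random vector u with E[|u_i|] = √(2/π)·σ*_i, then E[|P A⁻¹ y - [P, k*] K⁻¹ [y; y*]|] ≤ ‖(P A⁻¹ Bᵀ - k*) m‖_∞ · √(2/π) · Σ_i σ*_i. -/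
/-! Writing `K⁻¹` through the Schur complement `D - B A⁻¹ Bᵀ` of `A`, the change of the
posterior mean is `c u` with `c = (P A⁻¹ Bᵀ - k*) m`: linear in the innovation `u`, the
deterministic part `B A⁻¹ y` of `y*` cancelling. Then
`E|c u| ≤ Σᵢ |cᵢ| E|uᵢ| ≤ ‖c‖_∞ Σᵢ E|uᵢ|`. -/

open Matrix MeasureTheory

namespace Matrix

variable {l m n o α : Type*} [Fintype m] [Fintype n] [DecidableEq m] [DecidableEq n]
  [CommRing α]

theorem inv_fromBlocks_eq_of_isUnit_det (A : Matrix m m α) (B : Matrix m n α)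
    (C : Matrix n m α) (D : Matrix n n α) (hA : IsUnit A.det)
    (hS : IsUnit (D - C * A⁻¹ * B).det) :
    (fromBlocks A B C D)⁻¹ =
      fromBlocks (A⁻¹ + A⁻¹ * B * (D - C * A⁻¹ * B)⁻¹ * C * A⁻¹)
        (-(A⁻¹ * B * (D - C * A⁻¹ * B)⁻¹)) (-((D - C * A⁻¹ * B)⁻¹ * C * A⁻¹))
        (D - C * A⁻¹ * B)⁻¹ := by
  let _ := A.invertibleOfIsUnitDet hA
  let _ := (D - C * ⅟A * B).invertibleOfIsUnitDet (by rwa [invOf_eq_nonsing_inv])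
  let _ := fromBlocks₁₁Invertible A B C D
  rw [← invOf_eq_nonsing_inv, invOf_fromBlocks₁₁_eq]
  simp only [invOf_eq_nonsing_inv]

theorem mul_inv_mul_sub_fromCols_mul_inv_fromBlocks_mul_fromRows (A : Matrix m m α)
    (B : Matrix m n α) (C : Matrix n m α) (D : Matrix n n α) (P : Matrix l m α)
    (k : Matrix l n α) (y : Matrix m o α) (u : Matrix n o α) (hA : IsUnit A.det)
    (hS : IsUnit (D - C * A⁻¹ * B).det) :
    P * A⁻¹ * y - fromCols P k * (fromBlocks A B C D)⁻¹ * fromRows y (C * A⁻¹ * y + u) =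
      (P * A⁻¹ * B - k) * (D - C * A⁻¹ * B)⁻¹ * u := by
  rw [inv_fromBlocks_eq_of_isUnit_det A B C D hA hS, fromCols_mul_fromBlocks,
    fromCols_mul_fromRows]
  simp only [Matrix.mul_add, Matrix.add_mul, Matrix.sub_mul, Matrix.mul_neg, Matrix.neg_mul,
    Matrix.mul_assoc]
  abel

end Matrix

theorem Finset.sum_mul_le_sup'_mul_sum {ι α : Type*} [Semiring α] [LinearOrder α]
    [IsOrderedRing α] (s : Finset ι) (hs : s.Nonempty) (f g : ι → α)
    (hg : ∀ i ∈ s, 0 ≤ g i) :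
    ∑ i ∈ s, f i * g i ≤ s.sup' hs f * ∑ i ∈ s, g i := by
  rw [Finset.mul_sum]
  exact Finset.sum_le_sum fun i hi =>
    mul_le_mul_of_nonneg_right (Finset.le_sup' f hi) (hg i hi)

theorem MeasureTheory.integral_abs_sum_mul_le {ι Ω : Type*} [MeasurableSpace Ω]
    {μ : Measure Ω} (s : Finset ι) (c : ι → ℝ) {X : ι → Ω → ℝ}
    (hX : ∀ i ∈ s, Integrable (X i) μ) :
    ∫ ω, |∑ i ∈ s, c i * X i ω| ∂μ ≤ ∑ i ∈ s, |c i| * ∫ ω, |X i ω| ∂μ := by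
  have hsum : Integrable (fun ω => ∑ i ∈ s, c i * X i ω) μ :=
    integrable_finsetSum s fun i hi => (hX i hi).const_mul (c i)
  have hsum_abs : Integrable (fun ω => ∑ i ∈ s, |c i| * |X i ω|) μ :=
    integrable_finsetSum s fun i hi => (hX i hi).abs.const_mul |c i|
  calc ∫ ω, |∑ i ∈ s, c i * X i ω| ∂μ ≤ ∫ ω, ∑ i ∈ s, |c i| * |X i ω| ∂μ := by
        refine integral_mono hsum.abs hsum_abs fun ω => ?_
        simpa only [abs_mul] using Finset.abs_sum_le_sum_abs (fun i => c i * X i ω) s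
    _ = ∑ i ∈ s, |c i| * ∫ ω, |X i ω| ∂μ := by
        rw [integral_finsetSum s fun i hi => (hX i hi).abs.const_mul |c i|]
        simp only [integral_const_mul]

theorem expected_mean_change_bound_general {n p : ℕ} (hp : 0 < p)
    {Ω : Type*} [MeasureSpace Ω]
    (A : Matrix (Fin n) (Fin n) ℝ) (B : Matrix (Fin p) (Fin n) ℝ)
    (D : Matrix (Fin p) (Fin p) ℝ)
    (P : Matrix (Fin 1) (Fin n) ℝ) (kst : Matrix (Fin 1) (Fin p) ℝ)
    (y : Matrix (Fin n) (Fin 1) ℝ)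
    (hA : IsUnit A.det)
    (hSchur : IsUnit (D - B * A⁻¹ * Bᵀ).det)
    (σst : Fin p → ℝ)
    (u : Ω → Matrix (Fin p) (Fin 1) ℝ)
    (yst : Ω → Matrix (Fin p) (Fin 1) ℝ)
    (hyst : ∀ ω, yst ω = B * A⁻¹ * y + u ω)
    (hu_int : ∀ i : Fin p, Integrable fun ω => u ω i 0)
    (hu_abs : ∀ i : Fin p, ∫ ω, |u ω i 0| = Real.sqrt (2 / Real.pi) * σst i) :
    haveI : Nonempty (Fin p) := ⟨⟨0, hp⟩⟩
    (∫ ω, |(P * A⁻¹ * y -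
        Matrix.fromCols P kst * (Matrix.fromBlocks A Bᵀ B D)⁻¹ *
          Matrix.fromRows y (yst ω)) 0 0|) ≤
      (Finset.univ.sup' Finset.univ_nonempty fun i : Fin p =>
          |((P * A⁻¹ * Bᵀ - kst) * (D - B * A⁻¹ * Bᵀ)⁻¹) 0 i|) *
        (Real.sqrt (2 / Real.pi) * ∑ i, σst i) := by
  have : Nonempty (Fin p) := ⟨⟨0, hp⟩⟩
  set c := (P * A⁻¹ * Bᵀ - kst) * (D - B * A⁻¹ * Bᵀ)⁻¹
  have hchange : ∀ ω, (P * A⁻¹ * y - fromCols P kst * (fromBlocks A Bᵀ B D)⁻¹ *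
      fromRows y (yst ω)) 0 0 = ∑ i, c 0 i * u ω i 0 := fun ω => by
    rw [hyst ω, mul_inv_mul_sub_fromCols_mul_inv_fromBlocks_mul_fromRows A Bᵀ B D P kst y
      (u ω) hA hSchur, mul_apply]
  calc _ = ∫ ω, |∑ i, c 0 i * u ω i 0| := by simp_rw [hchange]
    _ ≤ ∑ i, |c 0 i| * ∫ ω, |u ω i 0| :=
        integral_abs_sum_mul_le _ _ fun i _ => hu_int i
    _ ≤ _ := by
        refine (Finset.sum_mul_le_sup'_mul_sum _ Finset.univ_nonempty _ _
          fun i _ => integral_nonneg fun ω => abs_nonneg (u ω i 0)).trans_eq ?_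
        simp only [hu_abs, ← Finset.mul_sum]

/-- Paper's Theorem 2: expected absolute change of the GP posterior mean is bounded by
`‖(P A⁻¹ Bᵀ - k*) m‖_∞ · √(2/π) · Σ_i σ*_i`. -/
theorem expected_mean_change_bound {n p : ℕ} (hp : 0 < p)
    {Ω : Type*} [MeasureSpace Ω] [IsProbabilityMeasure (volume : Measure Ω)]
    (A : Matrix (Fin n) (Fin n) ℝ) (B : Matrix (Fin p) (Fin n) ℝ)
    (D : Matrix (Fin p) (Fin p) ℝ)
    (P : Matrix (Fin 1) (Fin n) ℝ) (kst : Matrix (Fin 1) (Fin p) ℝ)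
    (y : Matrix (Fin n) (Fin 1) ℝ)
    (hA : IsUnit A.det) (hAsymm : A.IsSymm)
    (hK : IsUnit (Matrix.fromBlocks A Bᵀ B D).det)
    (hSchur : IsUnit (D - B * A⁻¹ * Bᵀ).det)
    (σst : Fin p → ℝ) (hσ : ∀ i, 0 ≤ σst i)
    (u : Ω → Matrix (Fin p) (Fin 1) ℝ)
    (yst : Ω → Matrix (Fin p) (Fin 1) ℝ)
    (hyst : ∀ ω, yst ω = B * A⁻¹ * y + u ω)
    (hu_int : ∀ i : Fin p, Integrable fun ω => u ω i 0)
    (hu_abs : ∀ i : Fin p, ∫ ω, |u ω i 0| = Real.sqrt (2 / Real.pi) * σst i) :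
    haveI : Nonempty (Fin p) := ⟨⟨0, hp⟩⟩
    (∫ ω, |(P * A⁻¹ * y -
        Matrix.fromCols P kst * (Matrix.fromBlocks A Bᵀ B D)⁻¹ *
          Matrix.fromRows y (yst ω)) 0 0|) ≤
      (Finset.univ.sup' Finset.univ_nonempty fun i : Fin p =>
          |((P * A⁻¹ * Bᵀ - kst) * (D - B * A⁻¹ * Bᵀ)⁻¹) 0 i|) *
        (Real.sqrt (2 / Real.pi) * ∑ i, σst i) :=
  expected_mean_change_bound_general hp A B D P kst y hA hSchur σst u yst hyst hu_int hu_abs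
end

section
/- Under the assumptions that K = [[A,Bᵀ],[B,D]] is symmetric positive definite with A invertible, the posterior variance never increases after adding observations: σ_z² - σ*_z² = (P A⁻¹ Bᵀ - k*) m (P A⁻¹ Bᵀ - k*)ᵀ ≥ 0, i.e., the GP posterior variance at any point z is nonincreasing as observations are added. -/
open Matrix

/-- The GP posterior variance is nonincreasing after adding observations:
`σ_z² - σ*_z² = (P A⁻¹ Bᵀ - k*) m (P A⁻¹ Bᵀ - k*)ᵀ ≥ 0`. -/
theorem posterior_variance_nonincreasing {n p : ℕ}
    (A : Matrix (Fin n) (Fin n) ℝ) (B : Matrix (Fin p) (Fin n) ℝ)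
    (D : Matrix (Fin p) (Fin p) ℝ)
    (P : Matrix (Fin 1) (Fin n) ℝ) (kst : Matrix (Fin 1) (Fin p) ℝ)
    (hA : IsUnit A.det)
    (hK : (Matrix.fromBlocks A Bᵀ B D).PosDef)
    (hKsymm : (Matrix.fromBlocks A Bᵀ B D).IsSymm) :
    Matrix.fromCols P kst * (Matrix.fromBlocks A Bᵀ B D)⁻¹ *
          (Matrix.fromCols P kst)ᵀ - P * A⁻¹ * Pᵀ =
        (P * A⁻¹ * Bᵀ - kst) * (D - B * A⁻¹ * Bᵀ)⁻¹ * (P * A⁻¹ * Bᵀ - kst)ᵀ ∧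
      0 ≤ ((P * A⁻¹ * Bᵀ - kst) * (D - B * A⁻¹ * Bᵀ)⁻¹ *
            (P * A⁻¹ * Bᵀ - kst)ᵀ) 0 0 := by
  haveI : Invertible A := A.invertibleOfIsUnitDet hA
  haveI : Invertible (Matrix.fromBlocks A Bᵀ B D) :=
    ((Matrix.isUnit_iff_isUnit_det _).mpr hK.det_pos.ne'.isUnit).invertible
  have hinvA : ⅟A = A⁻¹ := invOf_eq_nonsing_inv A
  -- A is symmetric
  have hAsymm : Aᵀ = A := by
    have := hKsymm
    rw [Matrix.IsSymm, Matrix.fromBlocks_transpose] at this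
    have h11 := congrArg Matrix.toBlocks₁₁ this
    simpa using h11
  -- A is positive definite
  have hApd : A.PosDef := by
    refine Matrix.PosDef.of_dotProduct_mulVec_pos ?_ ?_
    · rw [Matrix.IsHermitian]
      simpa using hAsymm
    · intro x hx
      have hx' : (Sum.elim x (0 : Fin p → ℝ)) ≠ 0 := by
        intro h
        apply hx
        funext i
        exact congrFun h (Sum.inl i)
      have := hK.dotProduct_mulVec_pos hx'
      simpa [Matrix.fromBlocks_mulVec, dotProduct, Fintype.sum_sum_type] using this
  -- Schur complement invertibility
  haveI : Invertible (D - B * ⅟A * Bᵀ) :=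
    Matrix.invertibleOfFromBlocks₁₁Invertible A Bᵀ B D
  haveI hSinv : Invertible (D - B * A⁻¹ * Bᵀ) := by rw [← hinvA]; infer_instance
  -- Schur complement is PosSemidef
  have hSpsd : (D - B * A⁻¹ * Bᵀ).PosSemidef := by
    have hBT : (Bᵀ)ᴴ = B := by ext i j; simp
    have := (Matrix.PosDef.fromBlocks₁₁ (R' := ℝ) Bᵀ D hApd).mp (by
      rw [hBT]; exact hK.posSemidef)
    rwa [hBT] at this
  have hMpsd : (D - B * A⁻¹ * Bᵀ)⁻¹.PosSemidef := hSpsd.inv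
  -- inverse of block matrix
  have hKinv : (Matrix.fromBlocks A Bᵀ B D)⁻¹ =
      Matrix.fromBlocks (A⁻¹ + A⁻¹ * Bᵀ * (D - B * A⁻¹ * Bᵀ)⁻¹ * B * A⁻¹)
        (-(A⁻¹ * Bᵀ * (D - B * A⁻¹ * Bᵀ)⁻¹))
        (-((D - B * A⁻¹ * Bᵀ)⁻¹ * B * A⁻¹)) ((D - B * A⁻¹ * Bᵀ)⁻¹) := by
    rw [← invOf_eq_nonsing_inv, Matrix.invOf_fromBlocks₁₁_eq,
      invOf_eq_nonsing_inv (D - B * ⅟A * Bᵀ), hinvA]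
  constructor
  · rw [hKinv, Matrix.transpose_fromCols, Matrix.fromCols_mul_fromBlocks,
      Matrix.fromCols_mul_fromRows]
    have hAinvT : A⁻¹ᵀ = A⁻¹ := by
      rw [Matrix.transpose_nonsing_inv, hAsymm]
    simp only [Matrix.transpose_sub, Matrix.transpose_mul, Matrix.transpose_transpose, hAinvT]
    simp only [Matrix.mul_add, Matrix.add_mul, Matrix.mul_sub, Matrix.sub_mul,
      Matrix.mul_neg, Matrix.neg_mul, Matrix.mul_assoc]
    abel
  · have hM := hMpsd
    set M := (D - B * A⁻¹ * Bᵀ)⁻¹ with hMdef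
    set v := P * A⁻¹ * Bᵀ - kst with hvdef
    have key : (v * M * vᵀ) 0 0 = star (fun j => v 0 j) ⬝ᵥ M.mulVec (fun j => v 0 j) := by
      simp only [Matrix.mul_apply, Matrix.transpose_apply, dotProduct, Matrix.mulVec,
        dotProduct, Pi.star_apply, star_trivial, Finset.sum_mul, Finset.mul_sum]
      rw [Finset.sum_comm]
      apply Finset.sum_congr rfl
      intro j _
      apply Finset.sum_congr rfl
      intro i _
      ring
    rw [key]
    exact hM.dotProduct_mulVec_nonneg _
end

section
/- The function u ↦ -u·Φ(-u) + φ(u) tends to 0 as u → +∞ and is asymptotic to -u as u → -∞ (i.e., (-u·Φ(-u) + φ(u)) - (-u) → 0 as u → -∞). -/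
/-!
Since `φ'(t) = -t φ(t)`, integrating from `u` to `∞` gives `∫_{t > u} t φ(t) dt = φ(u)`,
hence `g(u) := -u Φ(-u) + φ(u) = ∫_{t > u} (t - u) φ(t) dt`. For `u ≥ 0` we have
`0 ≤ t - u ≤ t` on `t > u`, so `0 ≤ g(u) ≤ φ(u)` and `g → 0` at `+∞`. The symmetry
`Φ(u) + Φ(-u) = 1` gives `g(-u) = g(u) + u`, which turns the behaviour at `-∞` into the one
at `+∞`.
-/

open Filter

noncomputable def stdGaussPDF (u : ℝ) : ℝ := (Real.sqrt (2 * Real.pi))⁻¹ * Real.exp (-u ^ 2 / 2)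

noncomputable def stdGaussCDF (u : ℝ) : ℝ := ∫ t in Set.Iic u, stdGaussPDF t

open Real MeasureTheory Set ProbabilityTheory

lemma stdGaussPDF_eq_gaussianPDFReal : stdGaussPDF = gaussianPDFReal 0 1 := by
  ext u
  simp [stdGaussPDF, gaussianPDFReal]

lemma stdGaussPDF_nonneg (u : ℝ) : 0 ≤ stdGaussPDF u := by
  rw [stdGaussPDF_eq_gaussianPDFReal]
  exact gaussianPDFReal_nonneg 0 1 u

lemma stdGaussPDF_neg (u : ℝ) : stdGaussPDF (-u) = stdGaussPDF u := by
  simp [stdGaussPDF]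

lemma integrable_stdGaussPDF : Integrable stdGaussPDF := by
  rw [stdGaussPDF_eq_gaussianPDFReal]
  exact integrable_gaussianPDFReal 0 1

lemma integral_stdGaussPDF : ∫ u, stdGaussPDF u = 1 := by
  rw [stdGaussPDF_eq_gaussianPDFReal]
  exact integral_gaussianPDFReal_eq_one 0 one_ne_zero

lemma integrable_mul_stdGaussPDF : Integrable fun t => t * stdGaussPDF t := by
  refine ((integrable_mul_exp_neg_mul_sq (b := 1 / 2) (by norm_num)).const_mul
    (√(2 * π))⁻¹).congr (.of_forall fun t => ?_)
  simp only [stdGaussPDF]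
  ring_nf

lemma hasDerivAt_stdGaussPDF (t : ℝ) : HasDerivAt stdGaussPDF (-t * stdGaussPDF t) t := by
  have h : HasDerivAt (fun s : ℝ => -s ^ 2 / 2) (-t) t := by
    simpa using ((hasDerivAt_pow 2 t).neg.div_const 2).congr_deriv (by push_cast; ring)
  exact (h.exp.const_mul (√(2 * π))⁻¹).congr_deriv (by unfold stdGaussPDF; ring)

lemma tendsto_stdGaussPDF_atTop : Tendsto stdGaussPDF atTop (nhds 0) := by
  have h : Tendsto (fun u : ℝ => -u ^ 2 / 2) atTop atBot :=
    (tendsto_neg_atTop_atBot.comp (tendsto_pow_atTop two_ne_zero)).atBot_div_const two_pos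
  have h' := (tendsto_exp_atBot.comp h).const_mul (√(2 * π))⁻¹
  rwa [mul_zero] at h'

lemma integral_Ioi_mul_stdGaussPDF (u : ℝ) :
    ∫ t in Ioi u, t * stdGaussPDF t = stdGaussPDF u := by
  have h := integral_Ioi_of_hasDerivAt_of_tendsto' (f := fun t => -stdGaussPDF t) (a := u)
    (fun t _ => (hasDerivAt_stdGaussPDF t).neg)
    (by simpa using integrable_mul_stdGaussPDF.integrableOn)
    (by simpa using tendsto_stdGaussPDF_atTop.neg)
  simpa using h

lemma stdGaussCDF_neg (u : ℝ) : stdGaussCDF (-u) = ∫ t in Ioi u, stdGaussPDF t := by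
  rw [stdGaussCDF, ← integral_comp_neg_Ioi]
  simp_rw [stdGaussPDF_neg]

lemma stdGaussCDF_add_stdGaussCDF_neg (u : ℝ) : stdGaussCDF u + stdGaussCDF (-u) = 1 := by
  rw [stdGaussCDF_neg, stdGaussCDF, ← integral_stdGaussPDF, ← setIntegral_union
    (Iic_disjoint_Ioi le_rfl) measurableSet_Ioi integrable_stdGaussPDF.integrableOn
    integrable_stdGaussPDF.integrableOn, Iic_union_Ioi, setIntegral_univ]

lemma stdGaussCDF_nonneg (u : ℝ) : 0 ≤ stdGaussCDF u :=
  setIntegral_nonneg measurableSet_Iic fun t _ => stdGaussPDF_nonneg t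

lemma mul_stdGaussCDF_neg_le_stdGaussPDF (u : ℝ) : u * stdGaussCDF (-u) ≤ stdGaussPDF u := by
  rw [stdGaussCDF_neg, ← integral_const_mul, ← integral_Ioi_mul_stdGaussPDF]
  refine setIntegral_mono_on (integrable_stdGaussPDF.integrableOn.const_mul u)
    integrable_mul_stdGaussPDF.integrableOn measurableSet_Ioi fun t ht => ?_
  exact mul_le_mul_of_nonneg_right (le_of_lt ht) (stdGaussPDF_nonneg t)

noncomputable def eiFactor (u : ℝ) : ℝ := -u * stdGaussCDF (-u) + stdGaussPDF u

lemma tendsto_eiFactor_atTop : Tendsto eiFactor atTop (nhds 0) := by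
  refine tendsto_of_tendsto_of_tendsto_of_le_of_le' tendsto_const_nhds tendsto_stdGaussPDF_atTop
    (.of_forall fun u => ?_) ?_
  · rw [eiFactor]
    linarith [mul_stdGaussCDF_neg_le_stdGaussPDF u]
  · filter_upwards [eventually_ge_atTop 0] with u hu
    rw [eiFactor]
    linarith [mul_nonneg hu (stdGaussCDF_nonneg (-u))]

lemma eiFactor_neg (u : ℝ) : eiFactor (-u) = eiFactor u + u := by
  rw [eiFactor, eiFactor, neg_neg, stdGaussPDF_neg]
  linear_combination u * stdGaussCDF_add_stdGaussCDF_neg u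

/-- `g(u) = -u·Φ(-u) + φ(u)` tends to `0` as `u → +∞` and is asymptotic to `-u`
as `u → -∞`. -/
theorem EI_factor_asymptotics :
    Tendsto (fun u : ℝ => -u * stdGaussCDF (-u) + stdGaussPDF u) atTop (nhds 0) ∧
    Tendsto (fun u : ℝ => (-u * stdGaussCDF (-u) + stdGaussPDF u) - (-u)) atBot
      (nhds 0) :=
  ⟨tendsto_eiFactor_atTop, (tendsto_eiFactor_atTop.comp tendsto_neg_atBot_atTop).congr
    fun u => (eiFactor_neg u).trans (sub_neg_eq_add _ _).symm⟩
end
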